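/- arXiv:2510.00168 — 5 statements merged into one kernel-verified Lean document; each statement's English description precedes it below -/
import Mathlib

section
/- For every n ∈ ℕ, every 2^n × 2^n complex matrix A, and every subspace S ⊆ 𝔽₂^{2n}, the Pauli projection equals the Pauli twirl over the symplectic complement: Π_S(A) = (1/|S^⊥|) · Σ_{q ∈ S^⊥} W_q · A · W_q†. (The paper states this for unitary A; its proof gives it for all operators by linearity.) -/
open scoped Kronecker Classical Matrix

namespace PauliSpec

/-- The field 𝔽₂. -/
abbrev F2 := ZMod 2

/-- The phase space 𝔽₂^{2n}, identified with pairs `(xX, xZ) ∈ 𝔽₂^n × 𝔽₂^n`. -/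
abbrev PhS (n : ℕ) := (Fin n → F2) × (Fin n → F2)

/-- Index type for `n`-qubit matrices: ℂ^{2^n} ≅ ⊗_{j=1}^n ℂ². -/
abbrev QIdx (n : ℕ) := Fin n → Fin 2

/-- The 2×2 Pauli X matrix. -/
def PauliX : Matrix (Fin 2) (Fin 2) ℂ := !![0, 1; 1, 0]

/-- The 2×2 Pauli Y matrix. -/
def PauliY : Matrix (Fin 2) (Fin 2) ℂ := !![0, -Complex.I; Complex.I, 0]

/-- The 2×2 Pauli Z matrix. -/
def PauliZ : Matrix (Fin 2) (Fin 2) ℂ := !![1, 0; 0, -1]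

/-- The Weyl operator `W_x := i^{xX·xZ} ⊗_j (X^{xX_j} Z^{xZ_j})`, written entrywise:
the `(u, v)` entry of the `n`-fold Kronecker product of matrices `M_j` is `∏_j (M_j)_{u_j v_j}`. -/
noncomputable def Weyl {n : ℕ} (x : PhS n) : Matrix (QIdx n) (QIdx n) ℂ :=
  fun u v =>
    (Complex.I ^ (∑ j, (x.1 j).val * (x.2 j).val)) *
      ∏ j, (PauliX ^ (x.1 j).val * PauliZ ^ (x.2 j).val) (u j) (v j)

/-- The symplectic product `[x,y] := ∑_j (xX_j·yZ_j + xZ_j·yX_j) ∈ 𝔽₂`. -/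
def sympl {n : ℕ} (x y : PhS n) : F2 :=
  ∑ j, (x.1 j * y.2 j + x.2 j * y.1 j)

lemma sympl_add_left {n : ℕ} (x y z : PhS n) :
    sympl (x + y) z = sympl x z + sympl y z := by
  simp only [sympl, Prod.fst_add, Prod.snd_add, Pi.add_apply, add_mul]
  rw [← Finset.sum_add_distrib]
  exact Finset.sum_congr rfl fun j _ => by ring

lemma sympl_smul_left {n : ℕ} (c : F2) (x z : PhS n) :
    sympl (c • x) z = c * sympl x z := by
  simp only [sympl, Prod.smul_fst, Prod.smul_snd, Pi.smul_apply, smul_eq_mul, Finset.mul_sum]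
  exact Finset.sum_congr rfl fun j _ => by ring

/-- The symplectic complement `S^⊥ := {x : [x,y] = 0 for all y ∈ S}`. -/
def symplComplement {n : ℕ} (S : Submodule F2 (PhS n)) : Submodule F2 (PhS n) where
  carrier := {x | ∀ y ∈ S, sympl x y = 0}
  add_mem' := by
    intro a b ha hb y hy
    rw [sympl_add_left, ha y hy, hb y hy, add_zero]
  zero_mem' := by
    intro y hy
    simp [sympl]
  smul_mem' := by
    intro c x hx y hy
    rw [sympl_smul_left, hx y hy, mul_zero]

/-- The Pauli support `supp(A) := {x : tr(W_x·A) ≠ 0}`. -/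
noncomputable def pauliSupport {n : ℕ} (A : Matrix (QIdx n) (QIdx n) ℂ) : Set (PhS n) :=
  {x | (Weyl x * A).trace ≠ 0}

/-- The Pauli projection `Π_S(A) := 2^{−n} ∑_{x∈S} tr(A·W_x)·W_x`. -/
noncomputable def pauliProj {n : ℕ} (S : Set (PhS n)) (A : Matrix (QIdx n) (QIdx n) ℂ) :
    Matrix (QIdx n) (QIdx n) ℂ :=
  (2 ^ n : ℂ)⁻¹ • ∑ᶠ x ∈ S, (A * Weyl x).trace • Weyl x

/-- The subspace `𝒲_{a,b} ⊆ 𝔽₂^{2n}`: `xX_j = 0` on the first `n−a` coordinates and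
`xZ_j = 0` on the first `n−a−b` coordinates. -/
def Wab (n a b : ℕ) : Submodule F2 (PhS n) where
  carrier := {x | (∀ j : Fin n, (j : ℕ) < n - a → x.1 j = 0) ∧
    ∀ j : Fin n, (j : ℕ) < n - a - b → x.2 j = 0}
  add_mem' := by
    rintro x y ⟨hx1, hx2⟩ ⟨hy1, hy2⟩
    refine ⟨fun j hj => ?_, fun j hj => ?_⟩
    · simp [Prod.fst_add, Pi.add_apply, hx1 j hj, hy1 j hj]
    · simp [Prod.snd_add, Pi.add_apply, hx2 j hj, hy2 j hj]
  zero_mem' := ⟨fun j _ => rfl, fun j _ => rfl⟩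
  smul_mem' := by
    rintro c x ⟨hx1, hx2⟩
    refine ⟨fun j hj => ?_, fun j hj => ?_⟩
    · simp [Prod.smul_fst, Pi.smul_apply, hx1 j hj]
    · simp [Prod.smul_snd, Pi.smul_apply, hx2 j hj]

/-- `A` is `(a,b)`-block-diagonal: under ℂ^{2^n} ≅ ℂ^{2^{n−a−b}} ⊗ ℂ^{2^b} ⊗ ℂ^{2^a},
`A = I ⊗ (∑_{y∈{0,1}^b} |y⟩⟨y| ⊗ A_y)`.  Entrywise: `A u v = 0` unless `u, v` agree on the
first `n−a` coordinates, and then the entry is `A_{u₂}(u₃, v₃)` where `u₂` is the middle `b`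
coordinates and `u₃, v₃` the last `a` coordinates. -/
def IsBlockDiag {n : ℕ} (a b : ℕ) (hab : a + b ≤ n)
    (A : Matrix (QIdx n) (QIdx n) ℂ) : Prop :=
  ∃ M : (Fin b → Fin 2) → Matrix (Fin a → Fin 2) (Fin a → Fin 2) ℂ,
    ∀ u v : QIdx n,
      A u v =
        if ∀ j : Fin n, (j : ℕ) < n - a → u j = v j then
          M (fun i => u ⟨n - a - b + i.1, by have := i.2; omega⟩)
            (fun i => u ⟨n - a + i.1, by have := i.2; omega⟩)
            (fun i => v ⟨n - a + i.1, by have := i.2; omega⟩)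
        else 0

/-- The ℓ² → ℓ² operator norm of a complex matrix. -/
noncomputable def l2OpNorm {ι κ : Type*} [Fintype ι] [Fintype κ] [DecidableEq κ]
    (A : Matrix ι κ ℂ) : ℝ :=
  ‖LinearMap.toContinuousLinearMap (Matrix.toEuclideanLin A)‖

/-- `C` is a Clifford unitary: it is unitary and conjugates every Weyl operator to a
signed Weyl operator. -/
def IsCliffordUnitary {n : ℕ} (C : Matrix (QIdx n) (QIdx n) ℂ) : Prop :=
  C ∈ Matrix.unitaryGroup (QIdx n) ℂ ∧
    ∀ x : PhS n, ∃ (y : PhS n) (s : ℂ), (s = 1 ∨ s = -1) ∧ C * Weyl x * Cᴴ = s • Weyl y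

/-- `C T C† := {y : ∃ x ∈ T, C·W_x·C† = ±W_y}`. -/
def conjSet {n : ℕ} (C : Matrix (QIdx n) (QIdx n) ℂ) (T : Set (PhS n)) : Set (PhS n) :=
  {y | ∃ x ∈ T, ∃ s : ℂ, (s = 1 ∨ s = -1) ∧ C * Weyl x * Cᴴ = s • Weyl y}

/-- The matrix acting as the 2×2 matrix `P` on qubit `i` and as the identity elsewhere:
`P_i := I^{⊗(i−1)} ⊗ P ⊗ I^{⊗(n−i)}`. -/
def onQubit {n : ℕ} (P : Matrix (Fin 2) (Fin 2) ℂ) (i : Fin n) :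
    Matrix (QIdx n) (QIdx n) ℂ :=
  fun u v => if ∀ j : Fin n, j ≠ i → u j = v j then P (u i) (v i) else 0

/-- The unitary on `2n` qubits exchanging the `i`-th qubit of the first group of `n`
qubits with the `i`-th qubit of the second group. -/
def swapQubit {n : ℕ} (i : Fin n) :
    Matrix (QIdx n × QIdx n) (QIdx n × QIdx n) ℂ :=
  fun p q =>
    if p.1 = Function.update q.1 i (q.2 i) ∧ p.2 = Function.update q.2 i (q.1 i) then 1 else 0

end PauliSpec

/-!
Writing `W_x` as the Kronecker product of the Hermitian single-qubit Paulis `i^{ab} X^a Z^b`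
gives `W_q W_x W_q = (-1)^{[q,x]} W_x` and the expansion `∑_x tr(A W_x) W_x = 2^n A`.
Twirling this expansion of `A` over `S^⊥` multiplies the coefficient of `W_x` by the character
sum `∑_{q ∈ S^⊥} (-1)^{[q,x]}`, which is `|S^⊥|` if `x ∈ S^⊥⊥ = S` and `0` otherwise.
-/

namespace Matrix

variable {ι R : Type*} [Fintype ι] {α : ι → Type*}

def piKronecker [CommMonoid R] (M : ∀ i, Matrix (α i) (α i) R) :
    Matrix (∀ i, α i) (∀ i, α i) R :=
  of fun u v => ∏ i, M i (u i) (v i)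

@[simp]
lemma piKronecker_apply [CommMonoid R] (M : ∀ i, Matrix (α i) (α i) R) (u v : ∀ i, α i) :
    piKronecker M u v = ∏ i, M i (u i) (v i) := rfl

lemma piKronecker_mul [DecidableEq ι] [∀ i, Fintype (α i)] [CommSemiring R]
    (M N : ∀ i, Matrix (α i) (α i) R) :
    piKronecker M * piKronecker N = piKronecker fun i => M i * N i := by
  ext u v
  simp only [mul_apply, piKronecker_apply, ← Finset.prod_mul_distrib, Fintype.prod_sum]

lemma piKronecker_one [DecidableEq ι] [∀ i, DecidableEq (α i)] [CommMonoidWithZero R] :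
    piKronecker (fun i => (1 : Matrix (α i) (α i) R)) = 1 := by
  ext u v
  simp only [piKronecker_apply, one_apply, Finset.prod_ite_zero, Finset.prod_const_one,
    Finset.mem_univ, true_implies, funext_iff]

lemma piKronecker_smul [CommMonoid R] (c : ι → R) (M : ∀ i, Matrix (α i) (α i) R) :
    piKronecker (fun i => c i • M i) = (∏ i, c i) • piKronecker M := by
  ext u v
  simp only [piKronecker_apply, smul_apply, smul_eq_mul, Finset.prod_mul_distrib]

lemma piKronecker_conjTranspose [CommSemiring R] [StarRing R]
    (M : ∀ i, Matrix (α i) (α i) R) :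
    (piKronecker M)ᴴ = piKronecker fun i => (M i)ᴴ := by
  ext u v
  simp only [conjTranspose_apply, piKronecker_apply, star_prod]

end Matrix

lemma AddChar.map_sum_eq_prod {ι A M : Type*} [AddCommMonoid A] [CommMonoid M]
    (ψ : AddChar A M) (s : Finset ι) (f : ι → A) : ψ (∑ i ∈ s, f i) = ∏ i ∈ s, ψ (f i) := by
  induction s using Finset.cons_induction with
  | empty => simp
  | cons i s _ ih => rw [Finset.sum_cons, AddChar.map_add_eq_mul, ih, Finset.prod_cons]

namespace PauliSpec

lemma F2_eq_zero_or_eq_one (a : F2) : a = 0 ∨ a = 1 := by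
  revert a; decide

@[simp] lemma F2_val_zero : (0 : F2).val = 0 := rfl

@[simp] lemma F2_val_one : (1 : F2).val = 1 := rfl

def signChar : AddChar F2 ℂ where
  toFun a := (-1) ^ a.val
  map_zero_eq_one' := rfl
  map_add_eq_mul' a b := by
    rcases F2_eq_zero_or_eq_one a with rfl | rfl <;>
    rcases F2_eq_zero_or_eq_one b with rfl | rfl <;>
      simp only [show (1 + 1 : F2) = 0 from rfl, add_zero, zero_add, F2_val_zero, F2_val_one] <;>
      norm_num

lemma signChar_apply (a : F2) : signChar a = (-1) ^ a.val := rfl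

lemma signChar_eq_one_iff (a : F2) : signChar a = 1 ↔ a = 0 := by
  rcases F2_eq_zero_or_eq_one a with rfl | rfl <;> norm_num [signChar_apply]

-- The phase `i^{xX·xZ}` of `Weyl`, distributed over the qubits: it makes every factor Hermitian.
noncomputable def pauli (a b : F2) : Matrix (Fin 2) (Fin 2) ℂ :=
  Complex.I ^ (a.val * b.val) • (PauliX ^ a.val * PauliZ ^ b.val)

lemma pauli_zero_zero : pauli 0 0 = 1 := by simp [pauli]
lemma pauli_zero_one : pauli 0 1 = PauliZ := by simp [pauli]
lemma pauli_one_zero : pauli 1 0 = PauliX := by simp [pauli]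
lemma pauli_one_one : pauli 1 1 = PauliY := by
  ext i j; fin_cases i <;> fin_cases j <;> simp [pauli, PauliX, PauliY, PauliZ]

lemma pauli_mem (a b : F2) : pauli a b ∈ ({1, PauliZ, PauliX, PauliY} : Set _) := by
  rcases F2_eq_zero_or_eq_one a with rfl | rfl <;> rcases F2_eq_zero_or_eq_one b with rfl | rfl <;>
    simp [pauli_zero_zero, pauli_zero_one, pauli_one_zero, pauli_one_one]

lemma pauli_conjTranspose (a b : F2) : (pauli a b)ᴴ = pauli a b := by
  obtain h | h | h | h := pauli_mem a b <;> rw [h]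
  · simp
  all_goals ext i j; fin_cases i <;> fin_cases j <;> simp [PauliX, PauliY, PauliZ]

lemma pauli_mul_self (a b : F2) : pauli a b * pauli a b = 1 := by
  obtain h | h | h | h := pauli_mem a b <;> rw [h]
  · simp
  all_goals ext i j; fin_cases i <;> fin_cases j <;> simp [PauliX, PauliY, PauliZ, Matrix.mul_apply]

lemma pauli_mul_comm (a b c d : F2) :
    pauli a b * pauli c d = signChar (a * d + b * c) • (pauli c d * pauli a b) := by
  rcases F2_eq_zero_or_eq_one a with rfl | rfl <;> rcases F2_eq_zero_or_eq_one b with rfl | rfl <;>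
  rcases F2_eq_zero_or_eq_one c with rfl | rfl <;> rcases F2_eq_zero_or_eq_one d with rfl | rfl <;>
  simp only [pauli_zero_zero, pauli_zero_one, pauli_one_zero, pauli_one_one, signChar_apply,
    show (1 + 1 : F2) = 0 from rfl, mul_one, mul_zero, add_zero, zero_add, F2_val_zero,
    F2_val_one] <;>
  ext i j <;> fin_cases i <;> fin_cases j <;>
  simp [PauliX, PauliY, PauliZ, Matrix.mul_apply]

lemma sum_F2 {M : Type*} [AddCommMonoid M] (f : F2 → M) : ∑ a, f a = f 0 + f 1 :=
  Fin.sum_univ_two f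

lemma sum_pauli_apply_mul_pauli_apply (t s u v : Fin 2) :
    ∑ c : F2 × F2, pauli c.1 c.2 t s * pauli c.1 c.2 u v = if t = v ∧ s = u then 2 else 0 := by
  simp only [Fintype.sum_prod_type, sum_F2, pauli_zero_zero, pauli_zero_one, pauli_one_zero,
    pauli_one_one]
  fin_cases t <;> fin_cases s <;> fin_cases u <;> fin_cases v <;>
    simp [PauliX, PauliY, PauliZ, one_add_one_eq_two]

section

variable {n : ℕ}

lemma Weyl_eq_piKronecker (x : PhS n) :
    Weyl x = Matrix.piKronecker fun j => pauli (x.1 j) (x.2 j) := by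
  ext u v
  simp only [Weyl, Matrix.piKronecker_apply, pauli, Matrix.smul_apply, smul_eq_mul,
    Finset.prod_mul_distrib, Finset.prod_pow_eq_pow_sum]

lemma Weyl_conjTranspose (x : PhS n) : (Weyl x)ᴴ = Weyl x := by
  simp only [Weyl_eq_piKronecker, Matrix.piKronecker_conjTranspose, pauli_conjTranspose]

lemma Weyl_mul_self (x : PhS n) : Weyl x * Weyl x = 1 := by
  simp only [Weyl_eq_piKronecker, Matrix.piKronecker_mul, pauli_mul_self, Matrix.piKronecker_one]

lemma Weyl_mul_comm (q x : PhS n) :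
    Weyl q * Weyl x = signChar (sympl q x) • (Weyl x * Weyl q) := by
  simp only [Weyl_eq_piKronecker, Matrix.piKronecker_mul, pauli_mul_comm (q.1 _),
    Matrix.piKronecker_smul, sympl, AddChar.map_sum_eq_prod]

lemma Weyl_mul_mul_self (q x : PhS n) :
    Weyl q * Weyl x * Weyl q = signChar (sympl q x) • Weyl x := by
  rw [Weyl_mul_comm, Matrix.smul_mul, mul_assoc, Weyl_mul_self, mul_one]

lemma sum_Weyl_apply_mul_Weyl_apply (t s u v : QIdx n) :
    ∑ x : PhS n, Weyl x t s * Weyl x u v = if t = v ∧ s = u then 2 ^ n else 0 := by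
  simp only [Weyl_eq_piKronecker, Matrix.piKronecker_apply, ← Finset.prod_mul_distrib]
  calc ∑ x : PhS n, ∏ j, pauli (x.1 j) (x.2 j) (t j) (s j) * pauli (x.1 j) (x.2 j) (u j) (v j)
      = ∑ c : Fin n → F2 × F2,
          ∏ j, pauli (c j).1 (c j).2 (t j) (s j) * pauli (c j).1 (c j).2 (u j) (v j) :=
        Fintype.sum_equiv (Equiv.arrowProdEquivProdArrow _ _ _).symm _ _ fun _ => rfl
    _ = ∏ j, ∑ c : F2 × F2, pauli c.1 c.2 (t j) (s j) * pauli c.1 c.2 (u j) (v j) :=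
        (Fintype.prod_sum fun j (c : F2 × F2) =>
          pauli c.1 c.2 (t j) (s j) * pauli c.1 c.2 (u j) (v j)).symm
    _ = _ := by
        simp only [sum_pauli_apply_mul_pauli_apply, Finset.prod_ite_zero, Finset.prod_const,
          Finset.card_univ, Fintype.card_fin, Finset.mem_univ, true_implies, funext_iff, forall_and]

lemma sum_trace_mul_Weyl_smul_Weyl (A : Matrix (QIdx n) (QIdx n) ℂ) :
    ∑ x : PhS n, (A * Weyl x).trace • Weyl x = (2 ^ n : ℂ) • A := by
  ext u v
  calc (∑ x : PhS n, (A * Weyl x).trace • Weyl x) u v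
      = ∑ s, ∑ t, A s t * ∑ x : PhS n, Weyl x t s * Weyl x u v := by
        simp only [Matrix.sum_apply, Matrix.smul_apply, smul_eq_mul, Matrix.trace,
          Matrix.diag_apply, Matrix.mul_apply, Finset.sum_mul, Finset.mul_sum, mul_assoc]
        rw [Finset.sum_comm]
        exact Finset.sum_congr rfl fun s _ => Finset.sum_comm
    _ = ((2 ^ n : ℂ) • A) u v := by
        simp [sum_Weyl_apply_mul_Weyl_apply, ite_and, mul_comm]

lemma sympl_comm (x y : PhS n) : sympl x y = sympl y x :=
  Finset.sum_congr rfl fun _ _ => by ring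

def symplForm (n : ℕ) : LinearMap.BilinForm F2 (PhS n) :=
  LinearMap.mk₂ F2 sympl sympl_add_left sympl_smul_left
    (fun x y z => by rw [sympl_comm, sympl_add_left, sympl_comm y, sympl_comm z])
    (fun c x y => by rw [sympl_comm, sympl_smul_left, sympl_comm y, smul_eq_mul])

lemma symplForm_apply (x y : PhS n) : symplForm n x y = sympl x y := rfl

lemma symplForm_isRefl : (symplForm n).IsRefl := fun x y h => by
  rwa [symplForm_apply, sympl_comm, ← symplForm_apply]

lemma symplForm_nondegenerate : (symplForm n).Nondegenerate := by
  refine symplForm_isRefl.nondegenerate_iff_separatingLeft.mpr fun x hx => ?_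
  have hX (j : Fin n) : x.1 j = 0 := by
    simpa [symplForm_apply, sympl, Pi.single_apply] using hx (0, Pi.single j 1)
  have hZ (j : Fin n) : x.2 j = 0 := by
    simpa [symplForm_apply, sympl, Pi.single_apply] using hx (Pi.single j 1, 0)
  exact Prod.ext (funext hX) (funext hZ)

lemma symplComplement_eq_orthogonal (S : Submodule F2 (PhS n)) :
    symplComplement S = (symplForm n).orthogonal S := by
  ext x
  rw [LinearMap.BilinForm.mem_orthogonal_iff]
  exact forall₂_congr fun y _ => by rw [symplForm_apply, sympl_comm]

lemma symplComplement_symplComplement (S : Submodule F2 (PhS n)) :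
    symplComplement (symplComplement S) = S := by
  rw [symplComplement_eq_orthogonal, symplComplement_eq_orthogonal]
  exact LinearMap.BilinForm.orthogonal_orthogonal symplForm_nondegenerate symplForm_isRefl S

lemma sum_signChar_sympl (S : Submodule F2 (PhS n)) (x : PhS n) :
    ∑ q : symplComplement S, signChar (sympl q x) =
      if x ∈ S then (Nat.card (symplComplement S) : ℂ) else 0 := by
  let ψ : AddChar (symplComplement S) ℂ :=
    signChar.compAddMonoidHom (AddMonoidHom.mk' (fun q => sympl q x) fun _ _ => sympl_add_left ..)
  have hψ : ψ = 0 ↔ x ∈ S := by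
    conv_rhs => rw [← symplComplement_symplComplement S]
    simp only [AddChar.ext_iff, AddChar.zero_apply, ψ, AddChar.compAddMonoidHom_apply,
      AddMonoidHom.mk'_apply, signChar_eq_one_iff, Subtype.forall]
    exact forall₂_congr fun q _ => by rw [sympl_comm]
  rw [Nat.card_eq_fintype_card]
  exact (AddChar.sum_eq_ite ψ).trans (if_congr hψ rfl rfl)

lemma sum_Weyl_mul_Weyl_mul_Weyl (S : Submodule F2 (PhS n)) (x : PhS n) :
    ∑ q : symplComplement S, Weyl q * Weyl x * Weyl q =
      if x ∈ S then (Nat.card (symplComplement S) : ℂ) • Weyl x else 0 := by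
  simp only [Weyl_mul_mul_self, ← Finset.sum_smul, sum_signChar_sympl, ite_smul, zero_smul]

lemma sum_Weyl_mul_mul_Weyl (S : Submodule F2 (PhS n)) (A : Matrix (QIdx n) (QIdx n) ℂ) :
    ∑ q : symplComplement S, Weyl q * A * Weyl q =
      (Nat.card (symplComplement S) : ℂ) • pauliProj (S : Set (PhS n)) A := by
  calc ∑ q : symplComplement S, Weyl q * A * Weyl q
      = ∑ q : symplComplement S,
          Weyl q * ((2 ^ n : ℂ)⁻¹ • ∑ x : PhS n, (A * Weyl x).trace • Weyl x) * Weyl q := by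
        rw [sum_trace_mul_Weyl_smul_Weyl, inv_smul_smul₀ (by norm_num)]
    _ = (2 ^ n : ℂ)⁻¹ • ∑ x : PhS n,
          (A * Weyl x).trace • ∑ q : symplComplement S, Weyl q * Weyl x * Weyl q := by
        simp only [Matrix.mul_smul, Matrix.smul_mul, Matrix.mul_sum, Matrix.sum_mul,
          Finset.smul_sum]
        exact Finset.sum_comm
    _ = _ := by
        rw [pauliProj, finsum_mem_def, finsum_eq_sum_of_fintype]
        simp only [sum_Weyl_mul_Weyl_mul_Weyl, Set.indicator_apply, SetLike.mem_coe, smul_ite,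
          smul_zero, Finset.smul_sum, smul_comm (Nat.card _ : ℂ)]

end

theorem stmt5 (n : ℕ) (S : Submodule F2 (PhS n)) (A : Matrix (QIdx n) (QIdx n) ℂ) :
    pauliProj (S : Set (PhS n)) A =
      (Nat.card (symplComplement S) : ℂ)⁻¹ •
        ∑ᶠ q ∈ (symplComplement S : Set (PhS n)), Weyl q * A * (Weyl q)ᴴ := by
  have hcard : (Nat.card (symplComplement S) : ℂ) ≠ 0 := Nat.cast_ne_zero.mpr Nat.card_pos.ne'
  have hsum : ∑ᶠ q ∈ (symplComplement S : Set (PhS n)), Weyl q * A * (Weyl q)ᴴ =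
      ∑ q : symplComplement S, Weyl q * A * Weyl q := by
    simp only [Weyl_conjTranspose]
    exact (finsum_set_coe_eq_finsum_mem _).symm.trans (finsum_eq_sum_of_fintype _)
  rw [hsum, sum_Weyl_mul_mul_Weyl, inv_smul_smul₀ hcard]

end PauliSpec
end

section
/- Let a, b, n ∈ ℕ with a + b ≤ n, let ε ≥ 0, and let U be a 2^n × 2^n unitary. If there exists an (a,b)-block-diagonal unitary V with ∥U − V∥_op ≤ ε, then ∥U − Π_{𝒲_{a,b}}(U)∥_op ≤ 2ε. -/
open scoped Kronecker Classical Matrix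

namespace PauliSpec

/-!
The Pauli projection onto `𝒲_{a,b}` is the twirl `A ↦ |T|⁻¹ ∑_{y ∈ T} W_y A W_y†` over the
symplectic complement `T` of `𝒲_{a,b}`. Both `𝒲_{a,b}` and `T` are products of subsets of
`𝔽₂²` over the qubits and `W_x` is a tensor product of single-qubit Paulis, so this reduces to
one identity per qubit. A twirl is an average of unitary conjugations, hence contracts the
operator norm, and it fixes every `(a,b)`-block-diagonal `V`, because `V` commutes with `W_y` for
`y ∈ T`. So `‖U - Π U‖ = ‖(U - V) - Π (U - V)‖ ≤ 2 ‖U - V‖`.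
-/

open Finset

section KroneckerPi

variable {ι κ R : Type*} [Fintype ι]

def kroneckerPi [CommSemiring R] (M : ι → Matrix κ κ R) : Matrix (ι → κ) (ι → κ) R :=
  fun u v => ∏ i, M i (u i) (v i)

lemma kroneckerPi_mul [DecidableEq ι] [Fintype κ] [CommSemiring R] (M N : ι → Matrix κ κ R) :
    kroneckerPi M * kroneckerPi N = kroneckerPi (M * N) := by
  ext u v
  simp only [kroneckerPi, Matrix.mul_apply, Pi.mul_apply, prod_univ_sum, Fintype.piFinset_univ,
    ← prod_mul_distrib]

lemma kroneckerPi_one [DecidableEq κ] [CommSemiring R] :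
    kroneckerPi (1 : ι → Matrix κ κ R) = 1 := by
  ext u v
  simp only [kroneckerPi, Pi.one_apply, Matrix.one_apply, prod_ite_zero, prod_const_one,
    funext_iff, mem_univ, true_implies]

lemma conjTranspose_kroneckerPi [CommSemiring R] [StarRing R] (M : ι → Matrix κ κ R) :
    (kroneckerPi M)ᴴ = kroneckerPi fun i => (M i)ᴴ := by
  ext u v
  simp [kroneckerPi, Matrix.conjTranspose_apply, star_prod]

lemma kroneckerPi_mem_unitaryGroup [DecidableEq ι] [Fintype κ] [DecidableEq κ] [CommRing R]
    [StarRing R] {M : ι → Matrix κ κ R} (hM : ∀ i, M i ∈ Matrix.unitaryGroup κ R) :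
    kroneckerPi M ∈ Matrix.unitaryGroup (ι → κ) R := by
  rw [Matrix.mem_unitaryGroup_iff, Matrix.star_eq_conjTranspose, conjTranspose_kroneckerPi,
    kroneckerPi_mul, ← kroneckerPi_one]
  exact congrArg kroneckerPi (funext fun i => Matrix.mem_unitaryGroup_iff.mp (hM i))

end KroneckerPi

lemma F2_cases (c : F2) : c = 0 ∨ c = 1 := by decide +revert

lemma F2_univ : (univ : Finset F2) = {0, 1} := by decide

def weyl₁ (c d : F2) : Matrix (Fin 2) (Fin 2) ℂ :=
  Complex.I ^ (c.val * d.val) • (PauliX ^ c.val * PauliZ ^ d.val)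

@[simp]
lemma weyl₁_zero_zero : weyl₁ 0 0 = 1 := by simp [weyl₁]

@[simp]
lemma weyl₁_one_zero : weyl₁ 1 0 = PauliX := by simp [weyl₁, ZMod.val_one]

@[simp]
lemma weyl₁_zero_one : weyl₁ 0 1 = PauliZ := by simp [weyl₁, ZMod.val_one]

@[simp]
lemma weyl₁_one_one : weyl₁ 1 1 = PauliY := by
  ext i j
  fin_cases i <;> fin_cases j <;> simp [weyl₁, ZMod.val_one, PauliX, PauliZ, PauliY]

lemma weyl₁_mem_unitaryGroup (c d : F2) : weyl₁ c d ∈ Matrix.unitaryGroup (Fin 2) ℂ := by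
  rw [Matrix.mem_unitaryGroup_iff]
  rcases F2_cases c with rfl | rfl <;> rcases F2_cases d with rfl | rfl <;>
  · ext i j
    fin_cases i <;> fin_cases j <;> simp [PauliX, PauliZ, PauliY, Matrix.mul_apply]

lemma Weyl_eq_kroneckerPi {n : ℕ} (x : PhS n) :
    Weyl x = kroneckerPi fun j => weyl₁ (x.1 j) (x.2 j) := by
  ext u v
  simp only [Weyl, kroneckerPi, weyl₁, Matrix.smul_apply, smul_eq_mul, prod_mul_distrib,
    prod_pow_eq_pow_sum]

lemma Weyl_mem_unitaryGroup {n : ℕ} (x : PhS n) : Weyl x ∈ Matrix.unitaryGroup (QIdx n) ℂ := by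
  rw [Weyl_eq_kroneckerPi]
  exact kroneckerPi_mem_unitaryGroup fun j => weyl₁_mem_unitaryGroup _ _

noncomputable def weylTwirl {n : ℕ} (T : Finset (PhS n)) (A : Matrix (QIdx n) (QIdx n) ℂ) :
    Matrix (QIdx n) (QIdx n) ℂ :=
  (#T : ℂ)⁻¹ • ∑ y ∈ T, Weyl y * A * (Weyl y)ᴴ

lemma weylTwirl_sub {n : ℕ} (T : Finset (PhS n)) (A B : Matrix (QIdx n) (QIdx n) ℂ) :
    weylTwirl T (A - B) = weylTwirl T A - weylTwirl T B := by
  simp only [weylTwirl, mul_sub, sub_mul, sum_sub_distrib, smul_sub]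

lemma weylTwirl_eq_self {n : ℕ} {T : Finset (PhS n)} (hT : T.Nonempty)
    {A : Matrix (QIdx n) (QIdx n) ℂ} (hA : ∀ y ∈ T, Commute (Weyl y) A) : weylTwirl T A = A := by
  have hconj : ∀ y ∈ T, Weyl y * A * (Weyl y)ᴴ = A := fun y hy => by
    rw [(hA y hy).eq, mul_assoc, ← Matrix.star_eq_conjTranspose,
      Matrix.mem_unitaryGroup_iff.mp (Weyl_mem_unitaryGroup y), mul_one]
  rw [weylTwirl, sum_congr rfl hconj, sum_const, ← Nat.cast_smul_eq_nsmul ℂ, smul_smul,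
    inv_mul_cancel₀ (by exact_mod_cast hT.card_pos.ne'), one_smul]

section OperatorNorm

open scoped Matrix.Norms.L2Operator

lemma norm_Weyl_mul_mul_conjTranspose {n : ℕ} (y : PhS n) (A : Matrix (QIdx n) (QIdx n) ℂ) :
    ‖Weyl y * A * (Weyl y)ᴴ‖ = ‖A‖ := by
  have hW := Weyl_mem_unitaryGroup y
  rw [mul_assoc, CStarRing.norm_mem_unitary_mul _ hW, ← Matrix.star_eq_conjTranspose,
    CStarRing.norm_mul_mem_unitary _ (Unitary.star_mem hW)]

lemma norm_weylTwirl_le {n : ℕ} (T : Finset (PhS n)) (A : Matrix (QIdx n) (QIdx n) ℂ) :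
    ‖weylTwirl T A‖ ≤ ‖A‖ := by
  rcases T.eq_empty_or_nonempty with rfl | hT
  · simp [weylTwirl]
  calc ‖weylTwirl T A‖ ≤ (#T : ℝ)⁻¹ * ∑ y ∈ T, ‖Weyl y * A * (Weyl y)ᴴ‖ := by
        rw [weylTwirl, norm_smul, norm_inv, Complex.norm_natCast]
        gcongr
        exact norm_sum_le _ _
    _ = ‖A‖ := by
        simp only [norm_Weyl_mul_mul_conjTranspose, sum_const, nsmul_eq_mul]
        field_simp [hT.card_pos.ne']

lemma norm_sub_weylTwirl_le {n : ℕ} {T : Finset (PhS n)} {V : Matrix (QIdx n) (QIdx n) ℂ}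
    (hV : weylTwirl T V = V) (U : Matrix (QIdx n) (QIdx n) ℂ) :
    ‖U - weylTwirl T U‖ ≤ 2 * ‖U - V‖ :=
  calc ‖U - weylTwirl T U‖ = ‖(U - V) - weylTwirl T (U - V)‖ := by
        rw [weylTwirl_sub, hV, sub_sub_sub_cancel_right]
    _ ≤ ‖U - V‖ + ‖weylTwirl T (U - V)‖ := norm_sub_le _ _
    _ ≤ ‖U - V‖ + ‖U - V‖ := by grw [norm_weylTwirl_le]
    _ = 2 * ‖U - V‖ := by ring

end OperatorNorm

lemma pauliProj_apply {n : ℕ} (S : Finset (PhS n)) (A : Matrix (QIdx n) (QIdx n) ℂ)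
    (u v : QIdx n) :
    pauliProj (S : Set (PhS n)) A u v =
      (2 ^ n)⁻¹ * ∑ p, ∑ q, A p q * ∑ x ∈ S, Weyl x q p * Weyl x u v := by
  simp only [pauliProj, finsum_mem_coe_finset, Matrix.smul_apply, Matrix.sum_apply,
    Matrix.trace, Matrix.diag_apply, Matrix.mul_apply, smul_eq_mul]
  congr 1
  simp only [sum_mul, mul_sum]
  rw [sum_comm]
  refine sum_congr rfl fun p _ => ?_
  rw [sum_comm]
  exact sum_congr rfl fun q _ => sum_congr rfl fun x _ => by ring

lemma weylTwirl_apply {n : ℕ} (T : Finset (PhS n)) (A : Matrix (QIdx n) (QIdx n) ℂ)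
    (u v : QIdx n) :
    weylTwirl T A u v =
      (#T : ℂ)⁻¹ * ∑ p, ∑ q, A p q * ∑ y ∈ T, Weyl y u p * star (Weyl y v q) := by
  simp only [weylTwirl, Matrix.smul_apply, Matrix.sum_apply, Matrix.mul_apply,
    Matrix.conjTranspose_apply, smul_eq_mul]
  congr 1
  simp only [sum_mul, mul_sum]
  rw [sum_comm]
  refine (sum_congr rfl fun q _ => sum_comm).trans ?_
  rw [sum_comm]
  exact sum_congr rfl fun p _ => sum_congr rfl fun q _ => sum_congr rfl fun y _ => by ring

lemma sum_piFinset_product_prod {ι α β R : Type*} [Fintype ι] [DecidableEq ι] [DecidableEq α]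
    [DecidableEq β] [CommSemiring R] (X : ι → Finset α) (Z : ι → Finset β)
    (g : ι → α → β → R) :
    ∑ x ∈ Fintype.piFinset X ×ˢ Fintype.piFinset Z, ∏ i, g i (x.1 i) (x.2 i) =
      ∏ i, ∑ c ∈ X i, ∑ d ∈ Z i, g i c d := by
  simp_rw [prod_univ_sum, sum_product]

/-- The single-qubit case of `pauliProj_eq_weylTwirl`; it holds when `X' ×ˢ Z'` is the
symplectic complement of `X ×ˢ Z` in `𝔽₂²`. -/
def IsQubitTwirlPair (X Z X' Z' : Finset F2) : Prop :=
  ∀ q p u v : Fin 2,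
    (∑ c ∈ X, ∑ d ∈ Z, weyl₁ c d q p * weyl₁ c d u v) / 2 =
      (∑ c ∈ X', ∑ d ∈ Z', weyl₁ c d u p * star (weyl₁ c d v q)) / (#X' * #Z')

lemma isQubitTwirlPair_trivial : IsQubitTwirlPair {0} {0} univ univ := by
  intro q p u v
  rw [F2_univ]
  fin_cases q <;> fin_cases p <;> fin_cases u <;> fin_cases v <;>
    simp [PauliX, PauliZ, PauliY] <;> norm_num

lemma isQubitTwirlPair_diagonal : IsQubitTwirlPair {0} univ {0} univ := by
  intro q p u v
  rw [F2_univ]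
  fin_cases q <;> fin_cases p <;> fin_cases u <;> fin_cases v <;> simp [PauliZ]

lemma isQubitTwirlPair_full : IsQubitTwirlPair univ univ {0} {0} := by
  intro q p u v
  rw [F2_univ]
  fin_cases q <;> fin_cases p <;> fin_cases u <;> fin_cases v <;> simp [PauliX, PauliZ, PauliY]

theorem pauliProj_eq_weylTwirl {n : ℕ} {X Z X' Z' : Fin n → Finset F2}
    (h : ∀ j, IsQubitTwirlPair (X j) (Z j) (X' j) (Z' j)) (A : Matrix (QIdx n) (QIdx n) ℂ) :
    pauliProj ↑(Fintype.piFinset X ×ˢ Fintype.piFinset Z) A =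
      weylTwirl (Fintype.piFinset X' ×ˢ Fintype.piFinset Z') A := by
  ext u v
  rw [pauliProj_apply, weylTwirl_apply, mul_sum, mul_sum]
  refine sum_congr rfl fun p _ => ?_
  rw [mul_sum, mul_sum]
  refine sum_congr rfl fun q _ => ?_
  rw [mul_left_comm, mul_left_comm (_⁻¹)]
  congr 1
  simp only [Weyl_eq_kroneckerPi, kroneckerPi, star_prod, ← prod_mul_distrib]
  rw [sum_piFinset_product_prod X Z fun j c d => weyl₁ c d (q j) (p j) * weyl₁ c d (u j) (v j),
    sum_piFinset_product_prod X' Z' fun j c d =>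
      weyl₁ c d (u j) (p j) * star (weyl₁ c d (v j) (q j)),
    card_product, Fintype.card_piFinset, Fintype.card_piFinset, ← prod_mul_distrib]
  push_cast
  rw [show (2 : ℂ) ^ n = ∏ _j : Fin n, 2 by simp, inv_mul_eq_div, inv_mul_eq_div,
    ← prod_div_distrib, ← prod_div_distrib]
  exact prod_congr rfl fun j _ => h j (q j) (p j) (u j) (v j)

def zeroBelow {n : ℕ} (m : ℕ) (j : Fin n) : Finset F2 := if (j : ℕ) < m then {0} else univ

def zeroFrom {n : ℕ} (m : ℕ) (j : Fin n) : Finset F2 := if (j : ℕ) < m then univ else {0}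

lemma mem_piFinset_zeroBelow {n m : ℕ} {s : Fin n → F2} :
    s ∈ Fintype.piFinset (zeroBelow m) ↔ ∀ j : Fin n, (j : ℕ) < m → s j = 0 := by
  simp only [Fintype.mem_piFinset, zeroBelow]
  exact forall_congr' fun j => by split_ifs <;> simp [*]

lemma mem_piFinset_zeroFrom {n m : ℕ} {s : Fin n → F2} :
    s ∈ Fintype.piFinset (zeroFrom m) ↔ ∀ j : Fin n, m ≤ (j : ℕ) → s j = 0 := by
  simp only [Fintype.mem_piFinset, zeroFrom]
  exact forall_congr' fun j => by split_ifs <;> simp [*]; omega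

lemma coe_Wab (n a b : ℕ) :
    (Wab n a b : Set (PhS n)) =
      ↑(Fintype.piFinset (zeroBelow (n - a)) ×ˢ Fintype.piFinset (zeroBelow (n - a - b)) :
        Finset (PhS n)) := by
  ext x
  simp only [coe_product, Set.mem_prod, mem_coe, mem_piFinset_zeroBelow]
  rfl

/-- The symplectic complement of `Wab n a b`. -/
def WabPerp (n a b : ℕ) : Finset (PhS n) :=
  Fintype.piFinset (zeroFrom (n - a - b)) ×ˢ Fintype.piFinset (zeroFrom (n - a))

lemma WabPerp_nonempty (n a b : ℕ) : (WabPerp n a b).Nonempty :=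
  ⟨0, mem_product.mpr ⟨mem_piFinset_zeroFrom.mpr fun _ _ => rfl,
    mem_piFinset_zeroFrom.mpr fun _ _ => rfl⟩⟩

lemma isQubitTwirlPair_Wab {n : ℕ} (a b : ℕ) (j : Fin n) :
    IsQubitTwirlPair (zeroBelow (n - a) j) (zeroBelow (n - a - b) j)
      (zeroFrom (n - a - b) j) (zeroFrom (n - a) j) := by
  unfold zeroBelow zeroFrom
  split_ifs
  · exact isQubitTwirlPair_trivial
  · exact isQubitTwirlPair_diagonal
  · omega
  · exact isQubitTwirlPair_full

theorem pauliProj_Wab {n : ℕ} (a b : ℕ) (A : Matrix (QIdx n) (QIdx n) ℂ) :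
    pauliProj (Wab n a b : Set (PhS n)) A = weylTwirl (WabPerp n a b) A := by
  rw [coe_Wab]
  exact pauliProj_eq_weylTwirl (isQubitTwirlPair_Wab a b) A

def bitFlip {n : ℕ} (s : Fin n → F2) (u : QIdx n) : QIdx n :=
  fun j => u j + Fin.ofNat 2 (s j).val

lemma bitFlip_apply_eq_iff {n : ℕ} (s : Fin n → F2) (u v : QIdx n) (j : Fin n) :
    bitFlip s u j = v j ↔ u j = bitFlip s v j := by
  have hbit : ∀ (c : F2) (x y : Fin 2), x + Fin.ofNat 2 c.val = y ↔ x = y + Fin.ofNat 2 c.val := by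
    decide
  exact hbit _ _ _

lemma bitFlip_eq_iff {n : ℕ} (s : Fin n → F2) (u v : QIdx n) :
    bitFlip s u = v ↔ u = bitFlip s v := by
  simp only [funext_iff, bitFlip_apply_eq_iff]

lemma bitFlip_apply_of_eq_zero {n : ℕ} {s : Fin n → F2} {j : Fin n} (hj : s j = 0)
    (u : QIdx n) : bitFlip s u j = u j := by
  simp [bitFlip, hj]

noncomputable def zSign {n : ℕ} (t : Fin n → F2) (p : QIdx n) : ℂ :=
  ∏ j, (-1) ^ ((t j).val * (p j).val)

lemma zSign_congr {n m : ℕ} {t : Fin n → F2} (ht : ∀ j : Fin n, m ≤ (j : ℕ) → t j = 0)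
    {p q : QIdx n} (hpq : ∀ j : Fin n, (j : ℕ) < m → p j = q j) : zSign t p = zSign t q := by
  refine prod_congr rfl fun j _ => ?_
  rcases lt_or_ge (j : ℕ) m with hj | hj
  · rw [hpq j hj]
  · simp [ht j hj]

lemma weyl₁_apply (c d : F2) (u p : Fin 2) :
    weyl₁ c d u p =
      if p = u + Fin.ofNat 2 c.val then Complex.I ^ (c.val * d.val) * (-1) ^ (d.val * p.val)
      else 0 := by
  rcases F2_cases c with rfl | rfl <;> rcases F2_cases d with rfl | rfl <;>
    fin_cases u <;> fin_cases p <;> simp [PauliX, PauliZ, PauliY, ZMod.val_one]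

lemma Weyl_apply {n : ℕ} (x : PhS n) (u p : QIdx n) :
    Weyl x u p =
      if p = bitFlip x.1 u then Complex.I ^ (∑ j, (x.1 j).val * (x.2 j).val) * zSign x.2 p
      else 0 := by
  simp only [Weyl_eq_kroneckerPi, kroneckerPi, weyl₁_apply, prod_ite_zero, bitFlip, funext_iff,
    mem_univ, true_implies, zSign, prod_mul_distrib, prod_pow_eq_pow_sum]

section BlockDiag

variable {n a b : ℕ} {hab : a + b ≤ n} {V : Matrix (QIdx n) (QIdx n) ℂ}

lemma IsBlockDiag.apply_eq_zero (hV : IsBlockDiag a b hab V) {u v : QIdx n}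
    (h : ¬ ∀ j : Fin n, (j : ℕ) < n - a → u j = v j) : V u v = 0 := by
  obtain ⟨M, hM⟩ := hV
  rw [hM, if_neg h]

lemma IsBlockDiag.apply_bitFlip (hV : IsBlockDiag a b hab V) {s : Fin n → F2}
    (hs : ∀ j : Fin n, n - a - b ≤ (j : ℕ) → s j = 0) (u v : QIdx n) :
    V (bitFlip s u) v = V u (bitFlip s v) := by
  obtain ⟨M, hM⟩ := hV
  have hfix : ∀ (w : QIdx n) (j : Fin n), n - a - b ≤ (j : ℕ) → bitFlip s w j = w j :=
    fun w j hj => bitFlip_apply_of_eq_zero (hs j hj) w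
  have hcond : (∀ j : Fin n, (j : ℕ) < n - a → bitFlip s u j = v j) ↔
      ∀ j : Fin n, (j : ℕ) < n - a → u j = bitFlip s v j := by
    simp only [bitFlip_apply_eq_iff]
  rw [hM, hM, if_congr hcond rfl rfl]
  congr 2 <;> funext i
  · exact hfix u _ (Nat.le_add_right _ _)
  · exact hfix u _ (by simp only; omega)
  · exact (hfix v _ (by simp only; omega)).symm

lemma IsBlockDiag.commute_Weyl (hV : IsBlockDiag a b hab V) {y : PhS n}
    (hy : y ∈ WabPerp n a b) : Commute (Weyl y) V := by
  obtain ⟨hs, ht⟩ := mem_product.mp hy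
  rw [mem_piFinset_zeroFrom] at hs ht
  ext u v
  simp only [Matrix.mul_apply, Weyl_apply, ite_mul, zero_mul, mul_ite, mul_zero, sum_ite_eq',
    mem_univ, if_true, eq_comm (a := v), bitFlip_eq_iff]
  rw [hV.apply_bitFlip hs]
  by_cases h : ∀ j : Fin n, (j : ℕ) < n - a → u j = bitFlip y.1 v j
  · rw [zSign_congr ht fun j hj => (bitFlip_apply_eq_iff _ _ _ _).mpr (h j hj)]
    ring
  · rw [hV.apply_eq_zero h]
    ring

end BlockDiag

theorem stmt8_general (a b n : ℕ) (hab : a + b ≤ n) (ε : ℝ)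
    (U : Matrix (QIdx n) (QIdx n) ℂ)
    (h : ∃ V : Matrix (QIdx n) (QIdx n) ℂ,
      IsBlockDiag a b hab V ∧ V ∈ Matrix.unitaryGroup (QIdx n) ℂ ∧ l2OpNorm (U - V) ≤ ε) :
    l2OpNorm (U - pauliProj (Wab n a b : Set (PhS n)) U) ≤ 2 * ε := by
  obtain ⟨V, hV, -, hUV⟩ := h
  have hfix : weylTwirl (WabPerp n a b) V = V :=
    weylTwirl_eq_self (WabPerp_nonempty n a b) fun y hy => hV.commute_Weyl hy
  rw [pauliProj_Wab]
  calc l2OpNorm (U - weylTwirl (WabPerp n a b) U) ≤ 2 * l2OpNorm (U - V) :=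
        norm_sub_weylTwirl_le hfix U
    _ ≤ 2 * ε := by gcongr

theorem stmt8 (a b n : ℕ) (hab : a + b ≤ n) (ε : ℝ) (hε : 0 ≤ ε)
    (U : Matrix (QIdx n) (QIdx n) ℂ) (hU : U ∈ Matrix.unitaryGroup (QIdx n) ℂ)
    (h : ∃ V : Matrix (QIdx n) (QIdx n) ℂ,
      IsBlockDiag a b hab V ∧ V ∈ Matrix.unitaryGroup (QIdx n) ℂ ∧ l2OpNorm (U - V) ≤ ε) :
    l2OpNorm (U - pauliProj (Wab n a b : Set (PhS n)) U) ≤ 2 * ε :=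
  stmt8_general a b n hab ε U h

end PauliSpec
end

section
/- Let a, b, n ∈ ℕ with a + b ≤ n, let ε ≥ 0, let U be a 2^n × 2^n unitary, and let A be an (a,b)-block-diagonal complex matrix (not necessarily unitary) with ∥U − A∥_op ≤ ε. Then there exists an (a,b)-block-diagonal unitary V with ∥U − V∥_op ≤ 2ε. -/
open scoped Kronecker Classical Matrix

/-!
The `(a,b)`-block-diagonal matrices form the range of a star-algebra homomorphism, hence a star
subalgebra, which is closed because it is finite-dimensional. If `ε ≥ 1`, take `V = 1`.
Otherwise `‖U - A‖ ≤ ε` traps the spectrum of `A†A` in `[(1-ε)², (1+ε)²]`, so the polar part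
`W = A (A†A)^{-1/2}` is unitary with `‖A - W‖ = ‖|A| - 1‖ ≤ ε`. As `A` times a continuous function
of `A†A`, `W` lies in every closed star subalgebra containing `A`; in particular it is
block-diagonal, and `‖U - W‖ ≤ 2ε`.
-/

open Matrix
open scoped Matrix.Norms.L2Operator

namespace Matrix

variable (R : Type*) {m n o : Type*} [Fintype m] [Fintype n] [Fintype o] [DecidableEq m]
  [DecidableEq n] [DecidableEq o] [CommSemiring R] [StarRing R]

def blockDiagonalStarAlgHom : (o → Matrix m m R) →⋆ₐ[R] Matrix (m × o) (m × o) R where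
  __ := blockDiagonalRingHom m o R
  commutes' r := by simp [Pi.algebraMap_def, algebraMap_eq_diagonal, blockDiagonal_diagonal]
  map_star' M := (blockDiagonal_conjTranspose M).symm

def reindexStarAlgEquiv (e : m ≃ n) : Matrix m m R ≃⋆ₐ[R] Matrix n n R where
  __ := reindexAlgEquiv R R e
  map_star' M := by simp [star_eq_conjTranspose, conjTranspose_submatrix]
  map_smul' := map_smul (reindexAlgEquiv R R e)

end Matrix

def Pi.compRightStarAlgHom (R : Type*) {ι κ A : Type*} [CommSemiring R] [Semiring A]
    [Algebra R A] [Star A] (f : ι → κ) : (κ → A) →⋆ₐ[R] (ι → A) where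
  toFun M := M ∘ f
  map_one' := rfl
  map_mul' _ _ := rfl
  map_zero' := rfl
  map_add' _ _ := rfl
  commutes' _ := rfl
  map_star' _ := rfl

section PolarPart

variable {ι : Type*} [Fintype ι] [DecidableEq ι]

lemma abs_norm_toEuclideanCLM_sub_norm_le {U : Matrix ι ι ℂ} (hU : U ∈ unitaryGroup ι ℂ)
    (B : Matrix ι ι ℂ) (x : EuclideanSpace ℂ ι) :
    |‖toEuclideanCLM (n := ι) (𝕜 := ℂ) B x‖ - ‖x‖| ≤ ‖B - U‖ * ‖x‖ := by
  let T := toEuclideanCLM (n := ι) (𝕜 := ℂ)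
  calc |‖T B x‖ - ‖x‖| = |‖T B x‖ - ‖T U x‖| := by
        rw [ContinuousLinearMap.norm_map_of_mem_unitary (Unitary.map_mem T hU)]
    _ ≤ ‖T B x - T U x‖ := abs_norm_sub_norm_le _ _
    _ = ‖T (B - U) x‖ := by simp
    _ ≤ ‖B - U‖ * ‖x‖ := (T (B - U)).le_opNorm x

lemma spectrum_star_mul_self_subset_Icc {U B : Matrix ι ι ℂ}
    (hU : U ∈ unitaryGroup ι ℂ) {ε : ℝ} (hε : ε ≤ 1) (hUB : ‖U - B‖ ≤ ε) :
    spectrum ℝ (star B * B) ⊆ Set.Icc ((1 - ε) ^ 2) ((1 + ε) ^ 2) := by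
  let T := toEuclideanCLM (n := ι) (𝕜 := ℂ)
  have hH : (star B * B).IsHermitian := isHermitian_conjTranspose_mul_self B
  rw [hH.spectrum_real_eq_range_eigenvalues]
  rintro _ ⟨i, rfl⟩
  set v := hH.eigenvectorBasis i
  have hv : ‖v‖ = 1 := hH.eigenvectorBasis.orthonormal.1 i
  have hμ : hH.eigenvalues i = ‖T B v‖ ^ 2 := by
    rw [ContinuousLinearMap.apply_norm_sq_eq_inner_adjoint_right,
      ← ContinuousLinearMap.star_eq_adjoint, ← ContinuousLinearMap.mul_def, ← map_star,
      ← map_mul, hH.eigenvalues_eq, EuclideanSpace.inner_eq_star_dotProduct, dotProduct_comm,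
      ofLp_toEuclideanCLM]
  have hBv := abs_norm_toEuclideanCLM_sub_norm_le hU B v
  rw [hv, mul_one, norm_sub_rev] at hBv
  obtain ⟨h1, h2⟩ := abs_le.1 (hBv.trans hUB)
  rw [hμ]
  constructor <;> gcongr <;> linarith

/-- `B |B|⁻¹`, the unitary factor in the polar decomposition `B = W |B|`. -/
noncomputable def polarPart (B : Matrix ι ι ℂ) : Matrix ι ι ℂ :=
  B * cfc (fun t : ℝ => (√t)⁻¹) (star B * B)

variable {B : Matrix ι ι ℂ}

lemma continuousOn_inv_sqrt_spectrum (h : ∀ t ∈ spectrum ℝ (star B * B), 0 < t) :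
    ContinuousOn (fun t : ℝ => (√t)⁻¹) (spectrum ℝ (star B * B)) :=
  Real.continuous_sqrt.continuousOn.inv₀ fun t ht => (Real.sqrt_pos.2 (h t ht)).ne'

lemma polarPart_mem_unitaryGroup (h : ∀ t ∈ spectrum ℝ (star B * B), 0 < t) :
    polarPart B ∈ unitaryGroup ι ℂ := by
  have hcont := continuousOn_inv_sqrt_spectrum h
  set S := cfc (fun t : ℝ => (√t)⁻¹) (star B * B)
  have hS : star S = S := (cfc_predicate _ _ : IsSelfAdjoint S).star_eq
  rw [mem_unitaryGroup_iff']
  calc star (B * S) * (B * S) = S * (star B * B) * S := by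
        simp only [star_mul, hS, star_eq_conjTranspose, Matrix.mul_assoc]
    _ = cfc (fun t : ℝ => (√t)⁻¹ * t * (√t)⁻¹) (star B * B) := by
        rw [cfc_mul (fun t : ℝ => (√t)⁻¹ * t) _ _ (hcont.mul continuousOn_id) hcont,
          cfc_mul _ (fun t : ℝ => t) _ hcont continuousOn_id, cfc_id' ℝ (star B * B)]
    _ = 1 := by
        refine (cfc_congr fun t ht => ?_).trans (cfc_one ℝ _)
        have := (Real.sqrt_pos.2 (h t ht)).ne'
        simp only [Pi.one_apply]
        field_simp
        exact (Real.sq_sqrt (h t ht).le).symm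

lemma norm_sub_polarPart_le {ε : ℝ} (hε : 0 ≤ ε) (hpos : ∀ t ∈ spectrum ℝ (star B * B), 0 < t)
    (h : spectrum ℝ (star B * B) ⊆ Set.Icc ((1 - ε) ^ 2) ((1 + ε) ^ 2)) :
    ‖B - polarPart B‖ ≤ ε := by
  have hW := polarPart_mem_unitaryGroup hpos
  have hSR : cfc (fun t : ℝ => (√t)⁻¹) (star B * B) * cfc Real.sqrt (star B * B) = 1 := by
    rw [← cfc_mul _ _ _ (continuousOn_inv_sqrt_spectrum hpos) Real.continuous_sqrt.continuousOn]
    refine (cfc_congr fun t ht => ?_).trans (cfc_one ℝ _)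
    exact inv_mul_cancel₀ (Real.sqrt_pos.2 (hpos t ht)).ne'
  -- `B = W |B|`, so `B - W = W (|B| - 1)` and `W` is an isometry
  have hBW : B - polarPart B = polarPart B * cfc (fun t : ℝ => √t - 1) (star B * B) := by
    rw [cfc_sub _ _ (star B * B), cfc_const_one ℝ (star B * B), Matrix.mul_sub, polarPart,
      Matrix.mul_assoc, hSR, Matrix.mul_one, Matrix.mul_one]
  rw [hBW, CStarRing.norm_mem_unitary_mul _ hW]
  refine norm_cfc_le hε fun t ht => ?_
  obtain ⟨h1, h2⟩ := h ht
  have h3 : 1 - ε ≤ √t := Real.le_sqrt_of_sq_le h1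
  have h4 : √t ≤ 1 + ε := Real.sqrt_le_iff.2 ⟨by linarith, h2⟩
  rw [Real.norm_eq_abs, abs_le]
  constructor <;> linarith

lemma polarPart_mem (S : StarSubalgebra ℂ (Matrix ι ι ℂ)) (hB : B ∈ S) : polarPart B ∈ S := by
  have : IsClosed (S : Set (Matrix ι ι ℂ)) :=
    S.toSubalgebra.toSubmodule.closed_of_finiteDimensional
  exact mul_mem hB (cfc_mem (𝕜 := ℝ) _ (mul_mem (star_mem hB) hB))

theorem exists_mem_unitaryGroup_norm_sub_le_two_mul (S : StarSubalgebra ℂ (Matrix ι ι ℂ))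
    {U : Matrix ι ι ℂ} (hU : U ∈ unitaryGroup ι ℂ) (hB : B ∈ S) {ε : ℝ} (hε : 0 ≤ ε)
    (hUB : ‖U - B‖ ≤ ε) :
    ∃ W ∈ S, W ∈ unitaryGroup ι ℂ ∧ ‖U - W‖ ≤ 2 * ε := by
  rcases le_or_gt 1 ε with hε1 | hε1
  · refine ⟨1, one_mem S, one_mem _, ?_⟩
    have hU1 : ‖U - 1‖ ≤ 2 := by
      nontriviality Matrix ι ι ℂ
      calc ‖U - 1‖ ≤ ‖U‖ + ‖(1 : Matrix ι ι ℂ)‖ := norm_sub_le _ _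
        _ = 2 := by rw [CStarRing.norm_of_mem_unitary hU, CStarRing.norm_one]; norm_num
    linarith
  · have hspec := spectrum_star_mul_self_subset_Icc hU hε1.le hUB
    have hpos : ∀ t ∈ spectrum ℝ (star B * B), 0 < t :=
      fun t ht => (pow_pos (sub_pos.2 hε1) 2).trans_le (hspec ht).1
    refine ⟨polarPart B, polarPart_mem S hB, polarPart_mem_unitaryGroup hpos, ?_⟩
    calc ‖U - polarPart B‖ ≤ ‖U - B‖ + ‖B - polarPart B‖ :=
          norm_sub_le_norm_sub_add_norm_sub _ _ _
      _ ≤ ε + ε := add_le_add hUB (norm_sub_polarPart_le hε hpos hspec)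
      _ = 2 * ε := by ring

end PolarPart

namespace PauliSpec

lemma l2OpNorm_eq_norm {ι κ : Type*} [Fintype ι] [Fintype κ] [DecidableEq κ]
    (A : Matrix ι κ ℂ) : l2OpNorm A = ‖A‖ := rfl

def splitLastQubits (a n : ℕ) (ha : a ≤ n) :
    QIdx n ≃ (Fin a → Fin 2) × (Fin (n - a) → Fin 2) where
  toFun u := (fun i => u ⟨n - a + i, by omega⟩, fun s => u ⟨s, by omega⟩)
  invFun p t := if h : (t : ℕ) < n - a then p.2 ⟨t, h⟩ else p.1 ⟨t - (n - a), by omega⟩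
  left_inv u := funext fun t => by
    by_cases h : (t : ℕ) < n - a
    · simp [h]
    · simp only [dif_neg h]
      exact congrArg u (Fin.ext (by simp only; omega))
  right_inv p := by ext <;> simp

lemma splitLastQubits_snd_eq_iff {a n : ℕ} (ha : a ≤ n) {u v : QIdx n} :
    (splitLastQubits a n ha u).2 = (splitLastQubits a n ha v).2 ↔
      ∀ j : Fin n, (j : ℕ) < n - a → u j = v j :=
  ⟨fun h j hj => congrFun h ⟨j, hj⟩, fun h => funext fun s => h _ s.2⟩

variable {n : ℕ} (a b : ℕ) (hab : a + b ≤ n)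

/-- `M ↦ I ⊗ (∑_y |y⟩⟨y| ⊗ M y)`. -/
noncomputable def blockDiagStarAlgHom :
    ((Fin b → Fin 2) → Matrix (Fin a → Fin 2) (Fin a → Fin 2) ℂ) →⋆ₐ[ℂ]
      Matrix (QIdx n) (QIdx n) ℂ :=
  (reindexStarAlgEquiv ℂ (splitLastQubits a n (by omega)).symm : _ →⋆ₐ[ℂ] _).comp <|
    (blockDiagonalStarAlgHom ℂ).comp <|
      Pi.compRightStarAlgHom ℂ fun (k : Fin (n - a) → Fin 2) (i : Fin b) =>
        k ⟨n - a - b + i, by omega⟩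

lemma blockDiagStarAlgHom_apply
    (M : (Fin b → Fin 2) → Matrix (Fin a → Fin 2) (Fin a → Fin 2) ℂ) (u v : QIdx n) :
    blockDiagStarAlgHom a b hab M u v =
      if ∀ j : Fin n, (j : ℕ) < n - a → u j = v j then
        M (fun i => u ⟨n - a - b + i.1, by have := i.2; omega⟩)
          (fun i => u ⟨n - a + i.1, by have := i.2; omega⟩)
          (fun i => v ⟨n - a + i.1, by have := i.2; omega⟩)
      else 0 :=
  (blockDiagonal_apply _ _ _).trans (if_congr (splitLastQubits_snd_eq_iff _) rfl rfl)

lemma isBlockDiag_iff_mem_range {A : Matrix (QIdx n) (QIdx n) ℂ} :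
    IsBlockDiag a b hab A ↔ A ∈ (blockDiagStarAlgHom a b hab).range := by
  show _ ↔ ∃ M, blockDiagStarAlgHom a b hab M = A
  refine exists_congr fun M => ?_
  simp only [← Matrix.ext_iff, blockDiagStarAlgHom_apply, eq_comm]

theorem stmt9 (a b n : ℕ) (hab : a + b ≤ n) (ε : ℝ) (hε : 0 ≤ ε)
    (U : Matrix (QIdx n) (QIdx n) ℂ) (hU : U ∈ Matrix.unitaryGroup (QIdx n) ℂ)
    (A : Matrix (QIdx n) (QIdx n) ℂ) (hA : IsBlockDiag a b hab A)
    (hUA : l2OpNorm (U - A) ≤ ε) :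
    ∃ V : Matrix (QIdx n) (QIdx n) ℂ,
      IsBlockDiag a b hab V ∧ V ∈ Matrix.unitaryGroup (QIdx n) ℂ ∧ l2OpNorm (U - V) ≤ 2 * ε := by
  simp only [l2OpNorm_eq_norm, isBlockDiag_iff_mem_range] at hUA hA ⊢
  exact exists_mem_unitaryGroup_norm_sub_le_two_mul _ hU hA hε hUA

end PauliSpec
end

section
/- Let d, m ≥ 1, let U₁, …, U_m ∈ ℂ^{d×d} be unitary matrices, and let a₁, …, a_m ≥ 0 be reals with s := Σ_k a_k > 0. Let P ∈ ℂ^{m×m} be any unitary whose first column is (√(a₁/s), …, √(a_m/s))ᵀ, and let SEL := Σ_{k=1}^m |k⟩⟨k| ⊗ U_k ∈ ℂ^{dm×dm} be the block-diagonal matrix with blocks U₁, …, U_m. Then the top-left d × d block of (P† ⊗ I_d) · SEL · (P ⊗ I_d) equals (1/s) · Σ_{k=1}^m a_k U_k; that is, (⟨1| ⊗ I_d) (P† ⊗ I_d) · SEL · (P ⊗ I_d) (|1⟩ ⊗ I_d) = (1/s) Σ_k a_k U_k, where |1⟩ is the first standard basis vector of ℂ^m. -/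
open scoped Kronecker Classical Matrix

namespace PauliSpec

theorem stmt17 (d m : ℕ) (hd : 1 ≤ d) (hm : 1 ≤ m)
    (Uk : Fin m → Matrix (Fin d) (Fin d) ℂ)
    (hUk : ∀ k, Uk k ∈ Matrix.unitaryGroup (Fin d) ℂ)
    (a : Fin m → ℝ) (ha : ∀ k, 0 ≤ a k) (s : ℝ) (hs : s = ∑ k, a k) (hspos : 0 < s)
    (P : Matrix (Fin m) (Fin m) ℂ) (hP : P ∈ Matrix.unitaryGroup (Fin m) ℂ)
    (hPcol : ∀ k : Fin m, P k ⟨0, hm⟩ = (Real.sqrt (a k / s) : ℂ))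
    (SEL : Matrix (Fin m × Fin d) (Fin m × Fin d) ℂ)
    (hSEL : ∀ p q : Fin m × Fin d, SEL p q = if p.1 = q.1 then Uk p.1 p.2 q.2 else 0) :
    ∀ i j : Fin d,
      ((Pᴴ ⊗ₖ (1 : Matrix (Fin d) (Fin d) ℂ)) * SEL * (P ⊗ₖ (1 : Matrix (Fin d) (Fin d) ℂ)))
          (⟨0, hm⟩, i) (⟨0, hm⟩, j) =
        (s : ℂ)⁻¹ * ∑ k, (a k : ℂ) * Uk k i j := by
  intro i j
  simp only [Matrix.mul_apply, Matrix.kroneckerMap_apply, Matrix.conjTranspose_apply,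
    Matrix.one_apply, hSEL, Fintype.sum_prod_type]
  have key : ∀ k : Fin m, (starRingEnd ℂ) (P k ⟨0, hm⟩) * P k ⟨0, hm⟩ = ((a k / s : ℝ) : ℂ) := by
    intro k
    rw [hPcol k, Complex.conj_ofReal, ← Complex.ofReal_mul,
      Real.mul_self_sqrt (div_nonneg (ha k) hspos.le)]
  calc (∑ k : Fin m, ∑ y : Fin d,
        (∑ k' : Fin m, ∑ x : Fin d,
          (star (P k' ⟨0, hm⟩) * if i = x then 1 else 0) * if k' = k then Uk k' x y else 0) *
          (P k ⟨0, hm⟩ * if y = j then 1 else 0))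
      = ∑ k : Fin m, (starRingEnd ℂ) (P k ⟨0, hm⟩) * P k ⟨0, hm⟩ * Uk k i j := by
        apply Finset.sum_congr rfl
        intro k _
        rw [Finset.sum_eq_single j]
        · simp only [if_pos rfl, mul_one]
          rw [Finset.sum_eq_single k]
          · rw [Finset.sum_eq_single i]
            · simp only [if_true, RCLike.star_def, one_pow, mul_one]; ring
            · intro x _ hx; simp [Ne.symm hx]
            · simp
          · intro k' _ hk'; simp [hk']
          · simp
        · intro y _ hy; simp [hy]
        · simp
    _ = (s : ℂ)⁻¹ * ∑ k, (a k : ℂ) * Uk k i j := by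
        rw [Finset.mul_sum]
        apply Finset.sum_congr rfl
        intro k _
        rw [key k]
        push_cast
        rw [div_eq_inv_mul]
        ring


end PauliSpec
end

section
/- Let d ∈ ℕ, let 𝒟 be a probability mass function on 𝔽₂^d, let ε, δ ∈ (0,1), and let m ∈ ℕ with m ≥ 2(d + log(1/δ))/ε. If x₁, …, x_m are drawn independently from 𝒟 (i.e., according to the m-fold product measure 𝒟^{⊗m} on (𝔽₂^d)^m), then with probability at least 1 − δ the 𝔽₂-linear span S := span{x₁, …, x_m} satisfies Σ_{x ∈ S} 𝒟(x) ≥ 1 − ε. -/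
open scoped Kronecker Classical Matrix

namespace PauliSpec

/-!
Let `Q_k(S)` be the probability that `S` together with `k` further independent samples spans
a subspace of mass below `1 - ε`. If `S` itself has mass `p < 1 - ε`, the next sample lies
outside `S` with probability `1 - p > ε` and then raises `dim S` by one. Induction on `k`
therefore gives `2^{dim S} Q_k(S) ≤ 2^d (1 - ε/2)^k`, and at `S = 0`, `k = m` the bound
`2^d (1 - ε/2)^m ≤ exp (d - ε m / 2) ≤ δ` follows from the choice of `m`.
-/

section SpanOfSamples

open Module Submodule

variable {K V : Type*} [Field K] [AddCommGroup V] [Module K V] [Fintype V] {D : V → ℝ}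

noncomputable def mass (D : V → ℝ) (S : Submodule K V) : ℝ := ∑ x with x ∈ S, D x

lemma finsum_mem_eq_mass (D : V → ℝ) (S : Submodule K V) :
    ∑ᶠ x ∈ (S : Set V), D x = mass D S := by
  rw [mass, ← finsum_mem_coe_finset]
  simp

lemma mass_mono (hD0 : ∀ x, 0 ≤ D x) {S T : Submodule K V} (h : S ≤ T) :
    mass D S ≤ mass D T :=
  Finset.sum_le_sum_of_subset_of_nonneg (Finset.monotone_filter_right _ fun _ _ => @h _)
    fun x _ _ => hD0 x

lemma sum_filter_not_mem_eq_one_sub_mass (hD1 : ∑ x, D x = 1) (S : Submodule K V) :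
    ∑ x with x ∉ S, D x = 1 - mass D S := by
  rw [mass, ← hD1, ← Finset.sum_filter_add_sum_filter_not Finset.univ (· ∈ S)]
  ring

noncomputable def failureProb (D : V → ℝ) (ε : ℝ) (k : ℕ) (S : Submodule K V) : ℝ :=
  ∑ ω : Fin k → V, (∏ i, D (ω i)) *
    if mass D (S ⊔ span K (Set.range ω)) < 1 - ε then 1 else 0

omit [AddCommGroup V] [Module K V] in
lemma sum_prod_mul_succ (D : V → ℝ) (k : ℕ) (f : (Fin (k + 1) → V) → ℝ) :
    ∑ ω : Fin (k + 1) → V, (∏ i, D (ω i)) * f ω =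
      ∑ x, D x * ∑ ω : Fin k → V, (∏ i, D (ω i)) * f (Fin.cons x ω) := by
  rw [← Fintype.sum_equiv (Fin.consEquiv fun _ => V) _ _ fun _ => rfl, Fintype.sum_prod_type]
  simp [Fin.prod_univ_succ, Finset.mul_sum, mul_assoc, Fin.consEquiv]

lemma failureProb_succ (D : V → ℝ) (ε : ℝ) (k : ℕ) (S : Submodule K V) :
    failureProb D ε (k + 1) S = ∑ x, D x * failureProb D ε k (S ⊔ span K {x}) := by
  simp only [failureProb, sum_prod_mul_succ, Fin.range_cons, span_insert, sup_assoc]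

lemma failureProb_nonneg (hD0 : ∀ x, 0 ≤ D x) (ε : ℝ) (k : ℕ) (S : Submodule K V) :
    0 ≤ failureProb D ε k S :=
  Finset.sum_nonneg fun ω _ =>
    mul_nonneg (Finset.prod_nonneg fun i _ => hD0 (ω i)) (by split_ifs <;> norm_num)

lemma failureProb_zero_le_one (D : V → ℝ) (ε : ℝ) (S : Submodule K V) :
    failureProb D ε 0 S ≤ 1 := by
  simp only [failureProb, Finset.univ_unique, Finset.sum_singleton, Finset.univ_eq_empty,
    Finset.prod_empty, one_mul]
  split_ifs <;> norm_num

lemma failureProb_eq_zero (hD0 : ∀ x, 0 ≤ D x) {ε : ℝ} (k : ℕ) {S : Submodule K V}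
    (h : 1 - ε ≤ mass D S) : failureProb D ε k S = 0 :=
  Finset.sum_eq_zero fun ω _ => by
    rw [if_neg (not_lt.mpr (h.trans (mass_mono hD0 le_sup_left))), mul_zero]

lemma two_mul_two_pow_finrank_le_of_lt {S T : Submodule K V} (h : S < T) :
    2 * 2 ^ finrank K S ≤ (2 : ℝ) ^ finrank K T := by
  rw [← pow_succ']
  exact pow_le_pow_right₀ one_le_two (finrank_lt_finrank_of_lt h)

lemma sum_mul_le_mass_mul_add (hD0 : ∀ x, 0 ≤ D x) (hD1 : ∑ x, D x = 1) {S : Submodule K V}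
    {f : V → ℝ} {a b : ℝ} (ha : ∀ x ∈ S, f x ≤ a) (hb : ∀ x ∉ S, f x ≤ b) :
    ∑ x, D x * f x ≤ mass D S * a + (1 - mass D S) * b := by
  rw [← Finset.sum_filter_add_sum_filter_not _ (· ∈ S), ← sum_filter_not_mem_eq_one_sub_mass hD1,
    mass, Finset.sum_mul, Finset.sum_mul]
  gcongr with x hx x hx
  · exact hD0 x
  · exact ha x (Finset.mem_filter.mp hx).2
  · exact hD0 x
  · exact hb x (Finset.mem_filter.mp hx).2

lemma two_pow_finrank_mul_failureProb_le (hD0 : ∀ x, 0 ≤ D x) (hD1 : ∑ x, D x = 1) {ε : ℝ}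
    (hε : ε ≤ 2) (k : ℕ) (S : Submodule K V) :
    2 ^ finrank K S * failureProb D ε k S ≤ 2 ^ finrank K V * (1 - ε / 2) ^ k := by
  induction k generalizing S with
  | zero =>
    calc 2 ^ finrank K S * failureProb D ε 0 S ≤ 2 ^ finrank K S * 1 := by
          gcongr; exact failureProb_zero_le_one D ε S
      _ ≤ 2 ^ finrank K V := by
          rw [mul_one]; exact pow_le_pow_right₀ one_le_two (finrank_le S)
      _ = 2 ^ finrank K V * (1 - ε / 2) ^ 0 := by ring
  | succ k ih =>
    set B := 2 ^ finrank K V * (1 - ε / 2) ^ k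
    have hc : 0 ≤ 1 - ε / 2 := by linarith
    have hB : 0 ≤ B := by positivity
    by_cases hp : 1 - ε ≤ mass D S
    · rw [failureProb_eq_zero hD0 _ hp, mul_zero]; positivity
    have h_mem : ∀ x ∈ S, 2 ^ finrank K S * failureProb D ε k (S ⊔ span K {x}) ≤ B := by
      intro x hx
      rw [sup_eq_left.mpr ((span_singleton_le_iff_mem x S).mpr hx)]
      exact ih S
    have h_not_mem : ∀ x ∉ S, 2 ^ finrank K S * failureProb D ε k (S ⊔ span K {x}) ≤ B / 2 := by
      intro x hx
      have hlt : S < S ⊔ span K {x} :=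
        left_lt_sup.mpr fun h => hx ((span_singleton_le_iff_mem x S).mp h)
      have hQ := failureProb_nonneg hD0 ε k (S ⊔ span K {x})
      have := mul_le_mul_of_nonneg_right (two_mul_two_pow_finrank_le_of_lt hlt) hQ
      linarith [ih (S ⊔ span K {x})]
    calc 2 ^ finrank K S * failureProb D ε (k + 1) S
        = ∑ x, D x * (2 ^ finrank K S * failureProb D ε k (S ⊔ span K {x})) := by
          rw [failureProb_succ, Finset.mul_sum]
          exact Finset.sum_congr rfl fun x _ => mul_left_comm _ _ _
      _ ≤ mass D S * B + (1 - mass D S) * (B / 2) :=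
          sum_mul_le_mass_mul_add hD0 hD1 h_mem h_not_mem
      _ ≤ 2 ^ finrank K V * (1 - ε / 2) ^ (k + 1) := by
          rw [pow_succ, ← mul_assoc]
          nlinarith

lemma two_pow_mul_one_sub_half_pow_le_exp {ε : ℝ} (hε : ε ≤ 2) (d m : ℕ) :
    2 ^ d * (1 - ε / 2) ^ m ≤ Real.exp (d - ε / 2 * m) := by
  calc 2 ^ d * (1 - ε / 2) ^ m ≤ Real.exp 1 ^ d * Real.exp (-(ε / 2)) ^ m := by
        have hc : 0 ≤ 1 - ε / 2 := by linarith
        gcongr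
        · linarith [Real.add_one_le_exp 1]
        · linarith [Real.add_one_le_exp (-(ε / 2))]
    _ = Real.exp (d - ε / 2 * m) := by
        rw [← Real.exp_nat_mul, ← Real.exp_nat_mul, ← Real.exp_add]
        ring_nf

lemma one_sub_failureProb_bot (hD1 : ∑ x, D x = 1) (ε : ℝ) (m : ℕ) :
    1 - failureProb D ε m (⊥ : Submodule K V) = ∑ ω : Fin m → V, (∏ i, D (ω i)) *
      if 1 - ε ≤ ∑ᶠ x ∈ (span K (Set.range ω) : Set V), D x then 1 else 0 := by
  have h_total : ∑ ω : Fin m → V, ∏ i, D (ω i) = 1 := by rw [← Fintype.sum_pow, hD1, one_pow]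
  conv_lhs => rw [← h_total]
  rw [failureProb, ← Finset.sum_sub_distrib]
  refine Finset.sum_congr rfl fun ω _ => ?_
  rw [finsum_mem_eq_mass, bot_sup_eq]
  split_ifs <;> linarith

end SpanOfSamples

theorem stmt18 (d : ℕ) (D : (Fin d → F2) → ℝ) (hD0 : ∀ x, 0 ≤ D x) (hD1 : ∑ x, D x = 1)
    (ε δ : ℝ) (hε : ε ∈ Set.Ioo (0 : ℝ) 1) (hδ : δ ∈ Set.Ioo (0 : ℝ) 1)
    (m : ℕ) (hm : 2 * ((d : ℝ) + Real.log (1 / δ)) / ε ≤ (m : ℝ)) :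
    1 - δ ≤ ∑ ω : Fin m → (Fin d → F2),
        (∏ i, D (ω i)) *
          (if 1 - ε ≤ ∑ᶠ x ∈ (Submodule.span F2 (Set.range ω) : Set (Fin d → F2)), D x
            then 1 else 0) := by
  have hε2 : ε ≤ 2 := by linarith [hε.2]
  have hexp : (d : ℝ) - ε / 2 * m ≤ Real.log δ := by
    rw [div_le_iff₀ hε.1, one_div, Real.log_inv] at hm
    linarith
  have hfail : failureProb D ε m (⊥ : Submodule F2 (Fin d → F2)) ≤ δ :=
    calc failureProb D ε m ⊥ ≤ 2 ^ d * (1 - ε / 2) ^ m := by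
          simpa using two_pow_finrank_mul_failureProb_le (K := F2) hD0 hD1 hε2 m ⊥
      _ ≤ Real.exp (d - ε / 2 * m) := two_pow_mul_one_sub_half_pow_le_exp hε2 d m
      _ ≤ Real.exp (Real.log δ) := Real.exp_le_exp.mpr hexp
      _ = δ := Real.exp_log hδ.1
  rw [← one_sub_failureProb_bot hD1]
  linarith

end PauliSpec
end
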